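/- arXiv:1608.02030 — 4 statements merged into one kernel-verified Lean document; each statement's English description precedes it below -/
import Mathlib

section
/- For every nonnegative integer k, the generating function identity 1/(q)_k = \sum_{j=0}^{k} q^{j^2} [k choose j]_q * 1/(q)_j holds as an identity of formal power series in q, where (q)_k = \prod_{i=1}^{k}(1-q^i) and [k choose j]_q = (q)_k/((q)_j (q)_{k-j}) is the Gaussian binomial coefficient. -/
open PowerSeries

/-- `(q)_k = (1-q)(1-q^2)⋯(1-q^k)` as a formal power series over `ℚ`. -/
noncomputable def qpoch (k : ℕ) : PowerSeries ℚ :=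
  ∏ i ∈ Finset.range k, (1 - (X : PowerSeries ℚ) ^ (i + 1))

/-- Gaussian binomial coefficient `[k choose j]_q = (q)_k / ((q)_j (q)_{k-j})`. -/
noncomputable def gauss (k j : ℕ) : PowerSeries ℚ :=
  qpoch k * (qpoch j * qpoch (k - j))⁻¹

/-!
Put `S(k, m) = ∑_{j ≤ k} q^{j(j+m)} [k choose j]_q / (q)_{j+m}`. The q-Pascal rule
`[k+1 choose j+1]_q = [k choose j+1]_q + q^{k-j} [k choose j]_q` gives
`S(k+1, m) = S(k, m) + q^{k+m+1} S(k, m+1)`, and since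
`1/(q)_n + q^{n+1}/(q)_{n+1} = 1/(q)_{n+1}`, induction on `k` yields `S(k, m) = 1/(q)_{k+m}`;
the identity is the case `m = 0`. The computation takes place in a field, for any `q` that is
not a root of unity, and is transported along the embedding of `ℚ⟦X⟧` into its fraction field.
-/

open Finset

section QAnalogues

variable {K : Type*} [Field K] {q : K}

def qPochhammer (q : K) (n : ℕ) : K := ∏ i ∈ range n, (1 - q ^ (i + 1))

-- For `j > k` the truncated `k - j` makes this `(q)_k / (q)_j` rather than `0`.
def qBinomial (q : K) (k j : ℕ) : K :=
  qPochhammer q k / (qPochhammer q j * qPochhammer q (k - j))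

@[simp] lemma qPochhammer_zero (q : K) : qPochhammer q 0 = 1 := prod_range_zero _

lemma qPochhammer_succ (q : K) (n : ℕ) :
    qPochhammer q (n + 1) = qPochhammer q n * (1 - q ^ (n + 1)) :=
  prod_range_succ _ _

lemma one_sub_pow_ne_zero (hq : ¬IsOfFinOrder q) {n : ℕ} (hn : 0 < n) : 1 - q ^ n ≠ 0 :=
  fun h => hq <| isOfFinOrder_iff_pow_eq_one.2 ⟨n, hn, (sub_eq_zero.1 h).symm⟩

lemma qPochhammer_ne_zero (hq : ¬IsOfFinOrder q) (n : ℕ) : qPochhammer q n ≠ 0 :=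
  prod_ne_zero_iff.2 fun i _ => one_sub_pow_ne_zero hq i.succ_pos

lemma qBinomial_zero_right (hq : ¬IsOfFinOrder q) (k : ℕ) : qBinomial q k 0 = 1 := by
  simp [qBinomial, qPochhammer_ne_zero hq]

lemma qBinomial_self (hq : ¬IsOfFinOrder q) (k : ℕ) : qBinomial q k k = 1 := by
  simp [qBinomial, qPochhammer_ne_zero hq]

lemma qBinomial_succ_succ (hq : ¬IsOfFinOrder q) {k j : ℕ} (hjk : j < k) :
    qBinomial q (k + 1) (j + 1) = qBinomial q k (j + 1) + q ^ (k - j) * qBinomial q k j := by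
  obtain ⟨d, rfl⟩ := Nat.exists_eq_add_of_lt hjk
  have hd : j + d + 1 - j = d + 1 := by omega
  have hd' : j + d + 1 - (j + 1) = d := by omega
  simp only [qBinomial, Nat.add_sub_add_right, hd, hd', qPochhammer_succ]
  have := qPochhammer_ne_zero hq j
  have := qPochhammer_ne_zero hq d
  have : 1 - q ^ (j + 1) ≠ 0 := one_sub_pow_ne_zero hq j.succ_pos
  have : 1 - q ^ (d + 1) ≠ 0 := one_sub_pow_ne_zero hq d.succ_pos
  field_simp
  ring

theorem sum_pow_mul_qBinomial_div_qPochhammer (hq : ¬IsOfFinOrder q) (k m : ℕ) :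
    ∑ j ∈ range (k + 1), q ^ (j * (j + m)) * qBinomial q k j / qPochhammer q (j + m) =
      (qPochhammer q (k + m))⁻¹ := by
  induction k generalizing m with
  | zero => simp [qBinomial_zero_right hq]
  | succ k ih =>
    let T (k m j : ℕ) : K := q ^ (j * (j + m)) * qBinomial q k j / qPochhammer q (j + m)
    have hbottom : T (k + 1) m 0 = T k m 0 := by simp [T, qBinomial_zero_right hq]
    have hpascal : ∀ j ∈ range k,
        T (k + 1) m (j + 1) = T k m (j + 1) + q ^ (k + m + 1) * T k (m + 1) j := by
      intro j hj
      obtain ⟨d, rfl⟩ := Nat.exists_eq_add_of_lt (mem_range.1 hj)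
      simp only [T, qBinomial_succ_succ hq (mem_range.1 hj), show j + d + 1 - j = d + 1 by omega,
        show j + 1 + m = j + (m + 1) by omega]
      ring
    have htop : T (k + 1) m (k + 1) = q ^ (k + m + 1) * T k (m + 1) k := by
      simp only [T, qBinomial_self hq, show k + 1 + m = k + (m + 1) by omega]
      ring
    have hrec : ∑ j ∈ range (k + 2), T (k + 1) m j =
        ∑ j ∈ range (k + 1), T k m j + q ^ (k + m + 1) * ∑ j ∈ range (k + 1), T k (m + 1) j := by
      rw [sum_range_succ, sum_range_succ', sum_congr rfl hpascal, sum_add_distrib,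
        sum_range_succ' (T k m), sum_range_succ (T k (m + 1)), mul_add, mul_sum, hbottom, htop]
      ring
    calc ∑ j ∈ range (k + 2), T (k + 1) m j
        = (qPochhammer q (k + m))⁻¹ + q ^ (k + m + 1) * (qPochhammer q (k + m + 1))⁻¹ := by
          rw [hrec, ih, ih, add_assoc]
      _ = (qPochhammer q (k + 1 + m))⁻¹ := by
          rw [show k + 1 + m = k + m + 1 by omega, qPochhammer_succ]
          have := qPochhammer_ne_zero hq (k + m)
          have : 1 - q ^ (k + m + 1) ≠ 0 := one_sub_pow_ne_zero hq (k + m).succ_pos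
          field_simp
          ring

end QAnalogues

namespace PowerSeries

lemma not_isOfFinOrder_X {R : Type*} [Semiring R] [Nontrivial R] : ¬IsOfFinOrder (X : R⟦X⟧) := by
  rintro ⟨n, hn, hXn⟩
  simpa [zero_pow hn.ne'] using congr_arg constantCoeff hXn

lemma map_inv_of_constantCoeff_ne_zero {k L : Type*} [Field k] [Field L] (f : k⟦X⟧ →+* L)
    {φ : k⟦X⟧} (h : constantCoeff φ ≠ 0) : f φ⁻¹ = (f φ)⁻¹ :=
  eq_inv_of_mul_eq_one_left <| by rw [← map_mul, PowerSeries.inv_mul_cancel φ h, map_one]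

end PowerSeries

section Gauss

variable {L : Type*} [Field L] (f : ℚ⟦X⟧ →+* L)

lemma constantCoeff_qpoch (n : ℕ) : constantCoeff (qpoch n) = 1 := by
  simp [qpoch, map_prod]

lemma map_qpoch (n : ℕ) : f (qpoch n) = qPochhammer (f X) n := by
  simp [qpoch, qPochhammer, map_prod]

lemma map_qpoch_inv (n : ℕ) : f (qpoch n)⁻¹ = (qPochhammer (f X) n)⁻¹ := by
  rw [map_inv_of_constantCoeff_ne_zero f (by simp [constantCoeff_qpoch]), map_qpoch]

lemma map_gauss (k j : ℕ) : f (gauss k j) = qBinomial (f X) k j := by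
  rw [gauss, PowerSeries.mul_inv_rev, map_mul, map_mul, map_qpoch_inv, map_qpoch_inv, map_qpoch,
    qBinomial, div_eq_mul_inv, mul_inv, mul_comm (qPochhammer _ (k - j))⁻¹]

end Gauss

/-- Cauchy's Durfee square identity:
`1/(q)_k = ∑_{j=0}^k q^{j²} [k choose j]_q 1/(q)_j`. -/
theorem durfee_square_identity (k : ℕ) :
    (qpoch k)⁻¹ =
      ∑ j ∈ Finset.range (k + 1),
        (X : PowerSeries ℚ) ^ (j ^ 2) * gauss k j * (qpoch j)⁻¹ := by
  let f := algebraMap ℚ⟦X⟧ (FractionRing ℚ⟦X⟧)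
  have hf : Function.Injective f := IsFractionRing.injective _ _
  have hq : ¬IsOfFinOrder (f X) :=
    (hf.isOfFinOrder_iff (f := f.toMonoidHom)).not.2 not_isOfFinOrder_X
  have hsum := sum_pow_mul_qBinomial_div_qPochhammer hq k 0
  simp only [add_zero] at hsum
  apply hf
  rw [map_qpoch_inv, ← hsum, map_sum]
  refine sum_congr rfl fun j _ => ?_
  rw [map_mul, map_mul, map_pow, map_gauss, map_qpoch_inv, sq, div_eq_mul_inv]
end

section
/- Let Q be a type A_n quiver with arrows a_1,...,a_{n-1}. Let I=[w,y] and J=[x,z] be intervals with w < x <= y < z, and suppose the arrows a_{x-1} and a_y both point to the right. Then \chi_Q(d_I, d_J) = -1. -/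
/-- For a type `Aₙ` quiver, arrow `aᵢ` joins vertices `i` and `i+1`; `dir i = true`
means `aᵢ` points right.  `tail dir i` is the tail of `aᵢ`. -/
def qtail (dir : ℕ → Bool) (i : ℕ) : ℕ := if dir i then i else i + 1

/-- The head of the arrow `aᵢ`. -/
def qhead (dir : ℕ → Bool) (i : ℕ) : ℕ := if dir i then i + 1 else i

/-- The indicator dimension vector of the interval `[a,b]`. -/
def ind (a b x : ℕ) : ℤ := if a ≤ x ∧ x ≤ b then 1 else 0

/-- The Euler form of a type `Aₙ` quiver with arrow directions `dir`:
`χ(d₁,d₂) = ∑ₓ d₁(x)d₂(x) - ∑ₐ d₁(t(a))d₂(h(a))`. -/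
def euler (n : ℕ) (dir : ℕ → Bool) (d1 d2 : ℕ → ℤ) : ℤ :=
  (∑ x ∈ Finset.Icc 1 n, d1 x * d2 x) -
    ∑ i ∈ Finset.Icc 1 (n - 1), d1 (qtail dir i) * d2 (qhead dir i)

/-!
Pointwise, `d_I d_J` is the indicator of `I ∩ J = [x, y]`, so the vertex sum is `y - x + 1`.
An arrow `aᵢ` contributes `1` to the arrow sum exactly when its tail lies in `I` and its head in
`J`: every arrow with both ends in `[x, y]` does, whatever its direction, and so do `a_{x-1}` and
`a_y` because they point right. These are the `y - x + 2` arrows `aᵢ` with `x - 1 ≤ i ≤ y`.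
-/

open Finset

lemma ind_mul_ind (a b c d t : ℕ) : ind a b t * ind c d t = ind (max a c) (min b d) t := by
  unfold ind
  split_ifs <;> omega

lemma ind_succ (c : ℕ) {d : ℕ} (hd : 1 ≤ d) (i : ℕ) : ind c d (i + 1) = ind (c - 1) (d - 1) i := by
  unfold ind
  split_ifs <;> omega

lemma sum_Icc_ind {n a b : ℕ} (ha : 1 ≤ a) (hab : a ≤ b + 1) (hb : b ≤ n) :
    ∑ t ∈ Icc 1 n, ind a b t = (b : ℤ) + 1 - a := by
  have hsub : Icc a b ⊆ Icc 1 n := Icc_subset_Icc ha hb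
  simp only [ind, ← mem_Icc, sum_boole, filter_mem_eq_inter,
    inter_eq_right.mpr hsub, Nat.card_Icc]
  omega

lemma ind_qtail_mul_ind_qhead {w x y zz : ℕ} {dir : ℕ → Bool} (hwx : w < x) (hxy : x ≤ y)
    (hyz : y < zz) (hx : dir (x - 1) = true) (hy : dir y = true) (i : ℕ) :
    ind w y (qtail dir i) * ind x zz (qhead dir i) = ind (x - 1) y i := by
  by_cases hd : dir i = true
  · rw [qtail, qhead, if_pos hd, if_pos hd, ind_succ x (by omega), ind_mul_ind,
      max_eq_right (by omega), min_eq_left (by omega)]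
  · have hix : i ≠ x - 1 := by rintro rfl; exact hd hx
    have hiy : i ≠ y := by rintro rfl; exact hd hy
    rw [qtail, qhead, if_neg hd, if_neg hd, ind_succ w (by omega), mul_comm, ind_mul_ind,
      max_eq_left (by omega), min_eq_right (by omega)]
    unfold ind
    split_ifs <;> omega

/-- Type (II), both arrows pointing right: for `I=[w,y]`, `J=[x,z]` with
`w < x ≤ y < z ≤ n` and `a_{x-1}`, `a_y` pointing right, `χ_Q(d_I,d_J) = -1`. -/
theorem euler_typeII_right (n w x y zz : ℕ) (dir : ℕ → Bool)
    (h1 : 1 ≤ w) (h2 : w < x) (h3 : x ≤ y) (h4 : y < zz) (h5 : zz ≤ n)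
    (hd1 : dir (x - 1) = true) (hd2 : dir y = true) :
    euler n dir (ind w y) (ind x zz) = -1 := by
  have vertices : ∑ t ∈ Icc 1 n, ind w y t * ind x zz t = (y : ℤ) + 1 - x := by
    simp only [ind_mul_ind, max_eq_right h2.le, min_eq_left h4.le]
    exact sum_Icc_ind (by omega) (by omega) (by omega)
  have arrows : ∑ i ∈ Icc 1 (n - 1), ind w y (qtail dir i) * ind x zz (qhead dir i)
      = (y : ℤ) + 1 - (x - 1 : ℕ) := by
    simp only [ind_qtail_mul_ind_qhead h2 h3 h4 hd1 hd2]
    exact sum_Icc_ind (by omega) (by omega) (by omega)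
  rw [euler, vertices, arrows]
  omega
end

section
/- Let Q be a type A_n quiver and let I = [x_1,x_2], J = [y_1,y_2] be disjoint intervals with x_2 <= y_2. If \chi_Q(d_I, d_J) < 0, then y_1 = x_2 + 1 and the arrow a_{x_2} points to the right (i.e. t(a_{x_2}) = x_2, h(a_{x_2}) = x_2+1); moreover in that case \chi_Q(d_I,d_J) = -1. -/
/-!
For disjoint intervals the diagonal part of the Euler form vanishes, so `χ(d_I, d_J)` is minus
the number of arrows from `I` to `J`. Since an arrow moves by one step, an arrow from
`[x₁, x₂]` to an interval lying to its right can only be `a_{x₂}` pointing right, with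
`y₁ = x₂ + 1`; so there is at most one such arrow, and a negative value forces it to exist.
-/

open Finset

lemma ind_eq_ite_mem (a b x : ℕ) : ind a b x = if x ∈ Icc a b then 1 else 0 := by
  simp only [ind, mem_Icc]

lemma ind_mul_ind_s9 (a b c d x y : ℕ) :
    ind a b x * ind c d y = if x ∈ Icc a b ∧ y ∈ Icc c d then 1 else 0 := by
  simp only [ind_eq_ite_mem, ite_zero_mul_ite_zero, mul_one]

lemma ind_mul_ind_of_lt {a b c d : ℕ} (hbc : b < c) (x : ℕ) : ind a b x * ind c d x = 0 := by
  rw [ind_mul_ind_s9, if_neg]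
  simp only [mem_Icc]
  omega

lemma qtail_lt_qhead_iff (dir : ℕ → Bool) (i : ℕ) : qtail dir i < qhead dir i ↔ dir i = true := by
  unfold qtail qhead
  cases dir i <;> simp

def arrowsFromTo (n : ℕ) (dir : ℕ → Bool) (I J : Finset ℕ) : Finset ℕ :=
  {i ∈ Icc 1 (n - 1) | qtail dir i ∈ I ∧ qhead dir i ∈ J}

theorem euler_ind_of_lt (n : ℕ) (dir : ℕ → Bool) {a b c d : ℕ} (hbc : b < c) :
    euler n dir (ind a b) (ind c d) = -#(arrowsFromTo n dir (Icc a b) (Icc c d)) := by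
  simp only [euler, ind_mul_ind_of_lt hbc, sum_const_zero, ind_mul_ind_s9, sum_boole,
    arrowsFromTo, zero_sub]

lemma eq_of_mem_arrowsFromTo {n : ℕ} {dir : ℕ → Bool} {a b c d i : ℕ} (hbc : b < c)
    (hi : i ∈ arrowsFromTo n dir (Icc a b) (Icc c d)) :
    i = b ∧ dir b = true ∧ c = b + 1 := by
  simp only [arrowsFromTo, mem_filter, mem_Icc] at hi
  have hdir : dir i = true := (qtail_lt_qhead_iff dir i).mp (by omega)
  simp only [qtail, qhead, hdir, if_true] at hi
  obtain rfl : i = b := by omega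
  exact ⟨rfl, hdir, by omega⟩

lemma card_arrowsFromTo_le_one (n : ℕ) (dir : ℕ → Bool) {a b c d : ℕ} (hbc : b < c) :
    #(arrowsFromTo n dir (Icc a b) (Icc c d)) ≤ 1 :=
  card_le_one.mpr fun _ hi _ hj =>
    (eq_of_mem_arrowsFromTo hbc hi).1.trans (eq_of_mem_arrowsFromTo hbc hj).1.symm

theorem euler_disjoint_neg_general (n x1 x2 y1 y2 : ℕ) (dir : ℕ → Bool)
    (hdisj : x2 < y1)
    (hneg : euler n dir (ind x1 x2) (ind y1 y2) < 0) :
    y1 = x2 + 1 ∧ dir x2 = true ∧ euler n dir (ind x1 x2) (ind y1 y2) = -1 := by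
  rw [euler_ind_of_lt n dir hdisj] at hneg ⊢
  obtain ⟨i, hi⟩ : (arrowsFromTo n dir (Icc x1 x2) (Icc y1 y2)).Nonempty :=
    card_pos.mp (by omega)
  obtain ⟨-, hdir, hy1⟩ := eq_of_mem_arrowsFromTo hdisj hi
  have hcard := card_arrowsFromTo_le_one n dir (a := x1) (d := y2) hdisj
  exact ⟨hy1, hdir, by omega⟩

/-- For disjoint intervals `I=[x₁,x₂]`, `J=[y₁,y₂]` with `x₂ ≤ y₂`: if the Euler form
is negative then `y₁ = x₂+1`, the arrow `a_{x₂}` points right, and the Euler form is `-1`. -/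
theorem euler_disjoint_neg (n x1 x2 y1 y2 : ℕ) (dir : ℕ → Bool)
    (h1 : 1 ≤ x1) (h2 : x1 ≤ x2) (h3 : y1 ≤ y2) (h4 : y2 ≤ n)
    (h5 : x2 ≤ y2) (hdisj : x2 < y1)
    (hneg : euler n dir (ind x1 x2) (ind y1 y2) < 0) :
    y1 = x2 + 1 ∧ dir x2 = true ∧ euler n dir (ind x1 x2) (ind y1 y2) = -1 :=
  euler_disjoint_neg_general n x1 x2 y1 y2 dir hdisj hneg
end

section
/- Let Q be a type A_n quiver with arrows a_1,...,a_{n-1}, and let w_Q^{(k)} be the permutations defined recursively from the arrow directions (w_Q^{(1)}=id, w_Q^{(2)}=id, and w_Q^{(k)} = \iota(w_Q^{(k-1)}) if a_{k-2},a_{k-1} point the same way, else \iota(w_Q^{(k-1)} w_0^{(k-1)})). Define BoxStrands = { ([w_Q^{(k)}(i), k-1], [w_Q^{(k)}(j), \ell]) : 1 <= i < j <= k <= \ell <= n } and ConditionStrands as the set of pairs of intervals (I,J) of type (I): I=[w,x-1], J=[x,z] with w < x <= z; type (II): I=[w,y], J=[x,z] with w < x <= y < z and a_{x-1}, a_y pointing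 the same direction; or type (III): I=[x,y], J=[w,z] with w < x <= y < z and a_{x-1}, a_y pointing opposite directions. Then BoxStrands = ConditionStrands. -/
/-- The permutations `w_Q^{(k)}` attached to a type `Aₙ` quiver with arrow directions
`dir` (`dir i = true` iff `aᵢ` points right): `w_Q^{(1)} = w_Q^{(2)} = id`, and for
`k ≥ 3`, `w_Q^{(k)} = ι(w_Q^{(k-1)})` if `a_{k-2}` and `a_{k-1}` point the same way,
and `w_Q^{(k)} = ι(w_Q^{(k-1)} w_0^{(k-1)})` otherwise (`w_0^{(k-1)} : i ↦ k - i`). -/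
def wq (dir : ℕ → Bool) : ℕ → ℕ → ℕ
  | 0, i => i
  | 1, i => i
  | 2, i => i
  | k + 3, i =>
    if i = k + 3 then k + 3
    else if dir (k + 1) = dir (k + 2) then wq dir (k + 2) i
    else wq dir (k + 2) (k + 3 - i)

/-- `BoxStrands`: pairs of intervals `([w_Q^{(k)}(i), k-1], [w_Q^{(k)}(j), ℓ])` with
`1 ≤ i < j ≤ k ≤ ℓ ≤ n`, encoded as pairs of pairs of endpoints. -/
def boxStrands (n : ℕ) (dir : ℕ → Bool) : Set ((ℕ × ℕ) × ℕ × ℕ) :=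
  {p | ∃ k i j l, 1 ≤ i ∧ i < j ∧ j ≤ k ∧ k ≤ l ∧ l ≤ n ∧
        p = ((wq dir k i, k - 1), (wq dir k j, l))}

/-- `ConditionStrands`: pairs of intervals of type (I), (II) or (III). -/
def conditionStrands (n : ℕ) (dir : ℕ → Bool) : Set ((ℕ × ℕ) × ℕ × ℕ) :=
  {p | -- type (I): I = [w, x-1], J = [x, z] with w < x ≤ z
      (∃ w x z, 1 ≤ w ∧ w < x ∧ x ≤ z ∧ z ≤ n ∧ p = ((w, x - 1), (x, z))) ∨
      -- type (II): I = [w, y], J = [x, z], w < x ≤ y < z, a_{x-1} and a_y same direction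
      (∃ w x y z, 1 ≤ w ∧ w < x ∧ x ≤ y ∧ y < z ∧ z ≤ n ∧
        dir (x - 1) = dir y ∧ p = ((w, y), (x, z))) ∨
      -- type (III): I = [x, y], J = [w, z], w < x ≤ y < z, a_{x-1} and a_y opposite
      (∃ w x y z, 1 ≤ w ∧ w < x ∧ x ≤ y ∧ y < z ∧ z ≤ n ∧
        dir (x - 1) ≠ dir y ∧ p = ((x, y), (w, z)))}

variable (dir : ℕ → Bool)

lemma wq_self : ∀ k, wq dir k k = k
  | 0 => rfl
  | 1 => rfl
  | 2 => rfl
  | k + 3 => by simp [wq]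

lemma wq_mem : ∀ k, ∀ i, 1 ≤ i → i ≤ k → 1 ≤ wq dir k i ∧ wq dir k i ≤ k
  | 0, i, h1, h2 => by omega
  | 1, i, h1, h2 => by simpa [wq] using ⟨h1, h2⟩
  | 2, i, h1, h2 => by simpa [wq] using ⟨h1, h2⟩
  | k + 3, i, h1, h2 => by
    by_cases hi : i = k + 3
    · simp [wq, hi]
    · have h2' : i ≤ k + 2 := by omega
      by_cases hd : dir (k + 1) = dir (k + 2)
      · have := wq_mem (k + 2) i h1 h2'
        simp only [wq, if_neg hi, if_pos hd]
        omega
      · have := wq_mem (k + 2) (k + 3 - i) (by omega) (by omega)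
        simp only [wq, if_neg hi, if_neg hd]
        omega

lemma wq_inj : ∀ k, ∀ i j, 1 ≤ i → i ≤ k → 1 ≤ j → j ≤ k →
    wq dir k i = wq dir k j → i = j
  | 0, i, j, _, _, _, _, _ => by omega
  | 1, i, j, _, _, _, _, h => by simpa [wq] using h
  | 2, i, j, _, _, _, _, h => by simpa [wq] using h
  | k + 3, i, j, hi1, hi2, hj1, hj2, h => by
    by_cases hi : i = k + 3 <;> by_cases hj : j = k + 3
    · omega
    · exfalso
      have hm := wq_mem dir (k + 2) j hj1 (by omega)
      have hm' := wq_mem dir (k + 2) (k + 3 - j) (by omega) (by omega)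
      simp only [wq, if_pos hi, if_neg hj] at h
      split at h <;> omega
    · exfalso
      have hm := wq_mem dir (k + 2) i hi1 (by omega)
      have hm' := wq_mem dir (k + 2) (k + 3 - i) (by omega) (by omega)
      simp only [wq, if_neg hi, if_pos hj] at h
      split at h <;> omega
    · by_cases hd : dir (k + 1) = dir (k + 2)
      · simp only [wq, if_neg hi, if_neg hj, if_pos hd] at h
        exact wq_inj (k + 2) i j hi1 (by omega) hj1 (by omega) h
      · simp only [wq, if_neg hi, if_neg hj, if_neg hd] at h
        have := wq_inj (k + 2) (k + 3 - i) (k + 3 - j) (by omega) (by omega)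
          (by omega) (by omega) h
        omega

lemma wq_surj : ∀ k, ∀ a, 1 ≤ a → a ≤ k → ∃ i, 1 ≤ i ∧ i ≤ k ∧ wq dir k i = a
  | 0, a, h1, h2 => by omega
  | 1, a, h1, h2 => ⟨a, h1, h2, rfl⟩
  | 2, a, h1, h2 => ⟨a, h1, h2, rfl⟩
  | k + 3, a, h1, h2 => by
    by_cases ha : a = k + 3
    · exact ⟨k + 3, by omega, le_refl _, by simp [wq, ha]⟩
    · obtain ⟨i, hi1, hi2, hi3⟩ := wq_surj (k + 2) a h1 (by omega)
      by_cases hd : dir (k + 1) = dir (k + 2)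
      · exact ⟨i, hi1, by omega, by simp only [wq, if_neg (by omega : i ≠ k + 3), if_pos hd]; exact hi3⟩
      · refine ⟨k + 3 - i, by omega, by omega, ?_⟩
        simp only [wq, if_neg (by omega : k + 3 - i ≠ k + 3), if_neg hd]
        have : k + 3 - (k + 3 - i) = i := by omega
        rw [this]; exact hi3

lemma bool_chain {a b c : Bool} (h1 : a ≠ b) (h2 : b ≠ c) : a = c := by
  revert h1 h2; revert a b c; decide

lemma wq_core : ∀ k, ∀ i j, 1 ≤ i → i < j → j < k →
    (wq dir k i < wq dir k j ∧ dir (wq dir k j - 1) = dir (k - 1)) ∨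
    (wq dir k j < wq dir k i ∧ dir (wq dir k i - 1) ≠ dir (k - 1))
  | 0, i, j, h1, h2, h3 => by omega
  | 1, i, j, h1, h2, h3 => by omega
  | 2, i, j, h1, h2, h3 => by omega
  | k + 3, i, j, h1, h2, h3 => by
    have hi : i ≠ k + 3 := by omega
    have hj : j ≠ k + 3 := by omega
    have hk3 : k + 3 - 1 = k + 2 := by omega
    by_cases hd : dir (k + 1) = dir (k + 2)
    · simp only [wq, if_neg hi, if_neg hj, if_pos hd, hk3]
      by_cases hjk : j = k + 2
      · -- b = k + 2, a < b
        left
        subst hjk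
        rw [wq_self]
        constructor
        · have hm := wq_mem dir (k + 2) i h1 (by omega)
          rcases lt_or_eq_of_le hm.2 with h | h
          · exact h
          · exfalso
            have := wq_inj dir (k + 2) i (k + 2) h1 (by omega) (by omega) le_rfl
              (by rw [h, wq_self])
            omega
        · have : k + 2 - 1 = k + 1 := by omega
          rw [this]; exact hd
      · have := wq_core (k + 2) i j h1 h2 (by omega)
        have hk2 : k + 2 - 1 = k + 1 := by omega
        rw [hk2] at this
        rcases this with ⟨h, h'⟩ | ⟨h, h'⟩
        · exact Or.inl ⟨h, h'.trans hd⟩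
        · exact Or.inr ⟨h, fun hc => h' (hc.trans hd.symm)⟩
    · simp only [wq, if_neg hi, if_neg hj, if_neg hd, hk3]
      by_cases hik : i = 1
      · -- k + 3 - i = k + 2, a = k + 2
        right
        subst hik
        have : k + 3 - 1 = k + 2 := by omega
        rw [this, wq_self]
        constructor
        · have hm := wq_mem dir (k + 2) (k + 3 - j) (by omega) (by omega)
          rcases lt_or_eq_of_le hm.2 with h | h
          · exact h
          · exfalso
            have := wq_inj dir (k + 2) (k + 3 - j) (k + 2) (by omega) (by omega)
              (by omega) le_rfl (by rw [h, wq_self])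
            omega
        · have : k + 2 - 1 = k + 1 := by omega
          rw [this]; exact hd
      · have := wq_core (k + 2) (k + 3 - j) (k + 3 - i) (by omega) (by omega) (by omega)
        have hk2 : k + 2 - 1 = k + 1 := by omega
        rw [hk2] at this
        rcases this with ⟨h, h'⟩ | ⟨h, h'⟩
        · exact Or.inr ⟨h, fun hc => hd (h'.symm.trans hc)⟩
        · exact Or.inl ⟨h, bool_chain h' hd⟩

lemma lt_of_core1 {k i j : ℕ} (hi1 : 1 ≤ i) (hj1 : 1 ≤ j) (hik : i < k) (hjk : j < k)
    (hlt : wq dir k i < wq dir k j) (hdir : dir (wq dir k j - 1) = dir (k - 1)) :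
    i < j := by
  rcases lt_trichotomy i j with h | h | h
  · exact h
  · subst h; omega
  · exfalso
    rcases wq_core dir k j i hj1 h hik with ⟨h', h''⟩ | ⟨h', h''⟩
    · omega
    · exact h'' hdir
lemma lt_of_core2 {k i j : ℕ} (hi1 : 1 ≤ i) (hj1 : 1 ≤ j) (hik : i < k) (hjk : j < k)
    (hlt : wq dir k j < wq dir k i) (hdir : dir (wq dir k i - 1) ≠ dir (k - 1)) :
    i < j := by
  rcases lt_trichotomy i j with h | h | h
  · exact h
  · subst h; omega
  · exfalso
    rcases wq_core dir k j i hj1 h hik with ⟨h', h''⟩ | ⟨h', h''⟩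
    · exact hdir h''
    · omega

/-- Lemma 3.3: `BoxStrands = ConditionStrands`. -/
theorem boxStrands_eq_conditionStrands (n : ℕ) (dir : ℕ → Bool) :
    boxStrands n dir = conditionStrands n dir := by
  ext p
  simp only [boxStrands, conditionStrands, Set.mem_setOf_eq]
  constructor
  · rintro ⟨k, i, j, l, h1, h2, h3, h4, h5, rfl⟩
    have hai := wq_mem dir k i h1 (by omega)
    have haj := wq_mem dir k j (by omega) h3
    by_cases hjk : j = k
    · -- type I
      subst hjk
      have hlt : wq dir j i < j := by
        rcases lt_or_eq_of_le hai.2 with h | h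
        · exact h
        · exact absurd (wq_inj dir j i j h1 (by omega) (by omega) le_rfl
            (by rw [h, wq_self])) (by omega)
      exact Or.inl ⟨wq dir j i, j, l, hai.1, hlt, h4, h5, by rw [wq_self]⟩
    · -- j < k
      have hjk' : j < k := lt_of_le_of_ne h3 hjk
      have hjlt : wq dir k j < k := by
        rcases lt_or_eq_of_le haj.2 with h | h
        · exact h
        · exact absurd (wq_inj dir k j k (by omega) h3 (by omega) le_rfl
            (by rw [h, wq_self])) (by omega)
      have hilt : wq dir k i < k := by
        rcases lt_or_eq_of_le hai.2 with h | h
        · exact h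
        · exact absurd (wq_inj dir k i k h1 (by omega) (by omega) le_rfl
            (by rw [h, wq_self])) (by omega)
      rcases wq_core dir k i j h1 h2 hjk' with ⟨h, h'⟩ | ⟨h, h'⟩
      · exact Or.inr (Or.inl ⟨wq dir k i, wq dir k j, k - 1, l, hai.1, h,
          by omega, by omega, h5, h', rfl⟩)
      · exact Or.inr (Or.inr ⟨wq dir k j, wq dir k i, k - 1, l, haj.1, h,
          by omega, by omega, h5, h', rfl⟩)
  · rintro (⟨w, x, z, hw, hwx, hxz, hzn, rfl⟩ |
      ⟨w, x, y, z, hw, hwx, hxy, hyz, hzn, hdir, rfl⟩ |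
      ⟨w, x, y, z, hw, hwx, hxy, hyz, hzn, hdir, rfl⟩)
    · -- type I: k = x, j = x, wq x i = w
      obtain ⟨i, hi1, hi2, hi3⟩ := wq_surj dir x w hw (by omega)
      have hix : i < x := by
        rcases lt_or_eq_of_le hi2 with h | h
        · exact h
        · exfalso; rw [h, wq_self] at hi3; omega
      exact ⟨x, i, x, z, hi1, hix, le_rfl, hxz, hzn, by rw [hi3, wq_self]⟩
    · -- type II: k = y + 1
      obtain ⟨i, hi1, hi2, hi3⟩ := wq_surj dir (y + 1) w hw (by omega)
      obtain ⟨j, hj1, hj2, hj3⟩ := wq_surj dir (y + 1) x (by omega) (by omega)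
      have hix : i < y + 1 := by
        rcases lt_or_eq_of_le hi2 with h | h
        · exact h
        · exfalso; rw [h, wq_self] at hi3; omega
      have hjx : j < y + 1 := by
        rcases lt_or_eq_of_le hj2 with h | h
        · exact h
        · exfalso; rw [h, wq_self] at hj3; omega
      have hij : i < j := lt_of_core1 dir hi1 hj1 hix hjx (by rw [hi3, hj3]; exact hwx)
        (by rw [hj3]; simpa using hdir)
      exact ⟨y + 1, i, j, z, hi1, hij, by omega, by omega, hzn,
        by rw [hi3, hj3]; simp⟩
    · -- type III: k = y + 1, wq i = x, wq j = w
      obtain ⟨i, hi1, hi2, hi3⟩ := wq_surj dir (y + 1) x (by omega) (by omega)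
      obtain ⟨j, hj1, hj2, hj3⟩ := wq_surj dir (y + 1) w hw (by omega)
      have hix : i < y + 1 := by
        rcases lt_or_eq_of_le hi2 with h | h
        · exact h
        · exfalso; rw [h, wq_self] at hi3; omega
      have hjx : j < y + 1 := by
        rcases lt_or_eq_of_le hj2 with h | h
        · exact h
        · exfalso; rw [h, wq_self] at hj3; omega
      have hij : i < j := lt_of_core2 dir hi1 hj1 hix hjx (by rw [hi3, hj3]; exact hwx)
        (by rw [hi3]; simpa using hdir)
      exact ⟨y + 1, i, j, z, hi1, hij, by omega, by omega, hzn,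
        by rw [hi3, hj3]; simp⟩
end
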